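/- arXiv:1212.4722 — 2 statements merged into one kernel-verified Lean document; each statement's English description precedes it below -/
import Mathlib

section
/- Let n ≥ 1, let P, A ∈ GL(2n, ℝ), and let W := {(P·u, P·A·u) : u ∈ ℝ^{2n}} ⊆ ℝ^{2n} × ℝ^{2n}. Assume Ω vanishes identically on W, i.e. Ω(w, w') = 0 for all w, w' ∈ W. Then the following are equivalent: (1) Ω₂ vanishes identically on W; (2) W is invariant under the complex structure 𝒥(u,a) := (a,−u), i.e. 𝒥(W) = W; (3) A² = −I_{2n}; (4) A is similar to J_{2n}, i.e. there exists S ∈ GL(2n, ℝ) with A = S·J_{2n}·S^{-1}. -/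
/-!
Write `M = Pᵀ J P` for the (invertible) matrix of the pull-back of `ω` by `P`. On
`W = {(Pu, PAu)}` the form `Ω` has matrix `MA + AᵀM` and `Ω₂` has matrix `M - AᵀMA`. Once
`AᵀM = -MA`, the latter is `M(1 + A²)`, so `Ω₂` vanishes on `W` iff `A² = -1`. The complex
structure sends `(Pu, PAu)` to `(PAu, -Pu)`, which lies in `W` iff `A²u = -u`. Finally, `A² = -1`
makes `ℝ^{2n}` an `n`-dimensional complex vector space with `i` acting by `A`; a complex basis
`b` yields the real basis `(A b_j, b_j)`, in which `A` has matrix `J`.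
-/

open Matrix

/-- The standard symplectic form on `ℝ^{2n}`, indexed by `Fin n ⊕ Fin n`. -/
noncomputable def sform (n : ℕ) (u v : Fin n ⊕ Fin n → ℝ) : ℝ :=
  ∑ i : Fin n, (u (Sum.inl i) * v (Sum.inr i) - u (Sum.inr i) * v (Sum.inl i))

/-- The symplectic form `Ω` on `ℝ^{2n} × ℝ^{2n}`:  `Ω((u,a),(v,b)) = ω(u,b) + ω(a,v)`. -/
noncomputable def OmegaForm (n : ℕ)
    (w w' : (Fin n ⊕ Fin n → ℝ) × (Fin n ⊕ Fin n → ℝ)) : ℝ :=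
  sform n w.1 w'.2 + sform n w.2 w'.1

/-- The form `Ω₂((u,a),(v,b)) = ω(u,v) − ω(a,b)` on `ℝ^{2n} × ℝ^{2n}`. -/
noncomputable def Omega2Form (n : ℕ)
    (w w' : (Fin n ⊕ Fin n → ℝ) × (Fin n ⊕ Fin n → ℝ)) : ℝ :=
  sform n w.1 w'.1 - sform n w.2 w'.2

/-- The matrix `J_{2n} = [[0, I_n], [−I_n, 0]]`. -/
noncomputable def Jmat (n : ℕ) : Matrix (Fin n ⊕ Fin n) (Fin n ⊕ Fin n) ℝ :=
  Matrix.fromBlocks 0 1 (-1) 0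

namespace Matrix

variable {m R : Type*} [Fintype m] [DecidableEq m]

theorem forall_dotProduct_mulVec_eq_zero_iff [NonAssocSemiring R] {X : Matrix m m R} :
    (∀ u v : m → R, u ⬝ᵥ X *ᵥ v = 0) ↔ X = 0 := by
  refine ⟨fun h => ?_, fun h u v => by rw [h, zero_mulVec, dotProduct_zero]⟩
  ext i j
  simpa [mulVec_single_one] using h (Pi.single i 1) (Pi.single j 1)

theorem sub_transpose_mul_mul_eq_zero_iff [CommRing R] {M A : Matrix m m R} (hM : IsUnit M.det)
    (hMA : M * A + Aᵀ * M = 0) : M - Aᵀ * M * A = 0 ↔ A * A = -1 := by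
  have hAM : Aᵀ * M = -(M * A) := eq_neg_of_add_eq_zero_right hMA
  have hfactor : M - Aᵀ * M * A = M * (1 + A * A) := by
    rw [hAM, Matrix.neg_mul, sub_neg_eq_add, Matrix.mul_add, Matrix.mul_one, Matrix.mul_assoc]
  rw [hfactor, ((isUnit_iff_isUnit_det M).2 hM).mul_right_eq_zero, add_eq_zero_iff_eq_neg']

theorem image_swap_neg_range_mulVec_eq_iff [Field R] {P A : Matrix m m R} (hP : IsUnit P.det) :
    (fun w : (m → R) × (m → R) => (w.2, -w.1)) '' Set.range (fun u => (P *ᵥ u, P *ᵥ A *ᵥ u)) =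
      Set.range (fun u => (P *ᵥ u, P *ᵥ A *ᵥ u)) ↔ A * A = -1 := by
  have hPinj : Function.Injective P.mulVec :=
    mulVec_injective_iff_isUnit.2 ((isUnit_iff_isUnit_det P).2 hP)
  constructor
  · intro h
    refine ext_of_mulVec_single fun i => ?_
    obtain ⟨v, hv⟩ : (P *ᵥ A *ᵥ Pi.single i 1, -(P *ᵥ Pi.single i 1)) ∈
        Set.range (fun u => (P *ᵥ u, P *ᵥ A *ᵥ u)) := h ▸ ⟨_, ⟨_, rfl⟩, rfl⟩
    simp only [Prod.mk.injEq, ← mulVec_neg] at hv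
    rw [← mulVec_mulVec, ← hPinj hv.1, hPinj hv.2, neg_mulVec, one_mulVec]
  · intro h
    have hAA : ∀ u, A *ᵥ A *ᵥ u = -u := fun u => by rw [mulVec_mulVec, h, neg_mulVec, one_mulVec]
    ext w
    constructor
    · rintro ⟨_, ⟨u, rfl⟩, rfl⟩
      exact ⟨A *ᵥ u, by simp only [hAA, mulVec_neg]⟩
    · rintro ⟨u, rfl⟩
      exact ⟨_, ⟨-(A *ᵥ u), rfl⟩, by simp only [mulVec_neg, hAA, neg_neg]⟩

end Matrix

variable {n : ℕ}

theorem Jmat_mulVec (v : Fin n ⊕ Fin n → ℝ) :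
    Jmat n *ᵥ v = Sum.elim (fun i => v (Sum.inr i)) (fun i => -v (Sum.inl i)) := by
  ext (i | i) <;> simp [Jmat, fromBlocks_mulVec, neg_mulVec]

theorem sform_eq_dotProduct (u v : Fin n ⊕ Fin n → ℝ) : sform n u v = u ⬝ᵥ Jmat n *ᵥ v := by
  simp [sform, Jmat_mulVec, dotProduct, Fintype.sum_sum_type, sub_eq_add_neg,
    Finset.sum_add_distrib]

theorem Jmat_mulVec_single_inl (j : Fin n) :
    Jmat n *ᵥ Pi.single (Sum.inl j) 1 = -Pi.single (Sum.inr j) 1 := by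
  rw [Jmat_mulVec]
  ext (i | i) <;> simp [Pi.single_apply]

theorem Jmat_mulVec_single_inr (j : Fin n) :
    Jmat n *ᵥ Pi.single (Sum.inr j) 1 = Pi.single (Sum.inl j) 1 := by
  rw [Jmat_mulVec]
  ext (i | i) <;> simp [Pi.single_apply]

theorem Jmat_mul_self : Jmat n * Jmat n = -1 := by
  refine ext_of_mulVec_single fun k => ?_
  rw [← mulVec_mulVec, neg_mulVec, one_mulVec]
  rcases k with j | j
  · rw [Jmat_mulVec_single_inl, mulVec_neg, Jmat_mulVec_single_inr]
  · rw [Jmat_mulVec_single_inr, Jmat_mulVec_single_inl]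

theorem isUnit_det_Jmat : IsUnit (Jmat n).det :=
  (isUnit_iff_isUnit_det _).1 <|
    IsUnit.of_mul_eq_one (-Jmat n) (by rw [Matrix.mul_neg, Jmat_mul_self, neg_neg])

theorem sform_mulVec_mulVec (X Y : Matrix (Fin n ⊕ Fin n) (Fin n ⊕ Fin n) ℝ)
    (u v : Fin n ⊕ Fin n → ℝ) : sform n (X *ᵥ u) (Y *ᵥ v) = u ⬝ᵥ (Xᵀ * Jmat n * Y) *ᵥ v := by
  rw [sform_eq_dotProduct, mulVec_mulVec, dotProduct_mulVec, ← vecMul_transpose, vecMul_vecMul,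
    ← dotProduct_mulVec, Matrix.mul_assoc]

theorem OmegaForm_mulVec (P A : Matrix (Fin n ⊕ Fin n) (Fin n ⊕ Fin n) ℝ)
    (u v : Fin n ⊕ Fin n → ℝ) :
    OmegaForm n (P *ᵥ u, P *ᵥ A *ᵥ u) (P *ᵥ v, P *ᵥ A *ᵥ v) =
      u ⬝ᵥ (Pᵀ * Jmat n * P * A + Aᵀ * (Pᵀ * Jmat n * P)) *ᵥ v := by
  simp only [OmegaForm, mulVec_mulVec, sform_mulVec_mulVec, transpose_mul, add_mulVec,
    dotProduct_add, Matrix.mul_assoc]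

theorem Omega2Form_mulVec (P A : Matrix (Fin n ⊕ Fin n) (Fin n ⊕ Fin n) ℝ)
    (u v : Fin n ⊕ Fin n → ℝ) :
    Omega2Form n (P *ᵥ u, P *ᵥ A *ᵥ u) (P *ᵥ v, P *ᵥ A *ᵥ v) =
      u ⬝ᵥ (Pᵀ * Jmat n * P - Aᵀ * (Pᵀ * Jmat n * P) * A) *ᵥ v := by
  simp only [Omega2Form, mulVec_mulVec, sform_mulVec_mulVec, transpose_mul, sub_mulVec,
    dotProduct_sub, Matrix.mul_assoc]

theorem exists_basis_inl_eq_mulVec_inr {A : Matrix (Fin n ⊕ Fin n) (Fin n ⊕ Fin n) ℝ}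
    (hA : A * A = -1) : ∃ B : Module.Basis (Fin n ⊕ Fin n) ℝ (Fin n ⊕ Fin n → ℝ),
      ∀ j, B (Sum.inl j) = A *ᵥ B (Sum.inr j) := by
  let I : ℂ →ₐ[ℝ] Module.End ℝ (Fin n ⊕ Fin n → ℝ) :=
    Complex.lift ⟨toLinAlgEquiv' A, by rw [← map_mul, hA, map_neg, map_one]⟩
  let _ : Module ℂ (Fin n ⊕ Fin n → ℝ) := Module.compHom _ I.toRingHom
  have : IsScalarTower ℝ ℂ (Fin n ⊕ Fin n → ℝ) :=
    ⟨fun r z v => show I (r • z) v = r • I z v by rw [map_smul, LinearMap.smul_apply]⟩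
  have : Module.Finite ℂ (Fin n ⊕ Fin n → ℝ) := Module.Finite.right ℝ ℂ _
  have hrank : Module.finrank ℂ (Fin n ⊕ Fin n → ℝ) = n := by
    have := Module.finrank_mul_finrank ℝ ℂ (Fin n ⊕ Fin n → ℝ)
    rw [Complex.finrank_real_complex, Module.finrank_fintype_fun_eq_card, Fintype.card_sum,
      Fintype.card_fin] at this
    omega
  let b := Module.finBasisOfFinrankEq ℂ _ hrank
  let e := (finTwoEquiv.prodCongr (Equiv.refl (Fin n))).trans
    ((Equiv.boolProdEquivSum (Fin n)).trans (Equiv.sumComm _ _))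
  refine ⟨(Complex.basisOneI.smulTower b).reindex e, fun j => ?_⟩
  have hl : e.symm (Sum.inl j) = (1, j) := rfl
  have hr : e.symm (Sum.inr j) = (0, j) := rfl
  simp only [Module.Basis.reindex_apply, hl, hr, Module.Basis.smulTower_apply,
    Complex.coe_basisOneI]
  change I Complex.I (b j) = A *ᵥ I 1 (b j)
  simp [I]

theorem exists_isUnit_det_eq_mul_Jmat_mul_inv_iff (A : Matrix (Fin n ⊕ Fin n) (Fin n ⊕ Fin n) ℝ) :
    (∃ S : Matrix (Fin n ⊕ Fin n) (Fin n ⊕ Fin n) ℝ, IsUnit S.det ∧ A = S * Jmat n * S⁻¹) ↔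
      A * A = -1 := by
  constructor
  · rintro ⟨S, hS, rfl⟩
    simp only [Matrix.mul_assoc, nonsing_inv_mul_cancel_left _ _ hS]
    rw [← Matrix.mul_assoc (Jmat n), Jmat_mul_self, Matrix.neg_mul, Matrix.one_mul,
      Matrix.mul_neg, mul_nonsing_inv _ hS]
  · intro hA
    obtain ⟨B, hB⟩ := exists_basis_inl_eq_mulVec_inr hA
    let S := (Pi.basisFun ℝ (Fin n ⊕ Fin n)).toMatrix B
    have hS : IsUnit S.det := by
      have := (Pi.basisFun ℝ (Fin n ⊕ Fin n)).invertibleToMatrix B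
      exact isUnit_det_of_invertible S
    have hScol : ∀ k, S *ᵥ Pi.single k 1 = B k := fun k => by
      ext i
      simp [S, Module.Basis.toMatrix_apply]
    have hAS : A * S = S * Jmat n := by
      refine ext_of_mulVec_single fun k => ?_
      rw [← mulVec_mulVec, ← mulVec_mulVec, hScol]
      rcases k with j | j
      · rw [Jmat_mulVec_single_inl, mulVec_neg, hScol, hB, mulVec_mulVec, hA, neg_mulVec,
          one_mulVec]
      · rw [Jmat_mulVec_single_inr, hScol, hB]
    exact ⟨S, hS, by rw [← hAS, mul_nonsing_inv_cancel_right _ _ hS]⟩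

theorem stmt14_general (n : ℕ)
    (P A : Matrix (Fin n ⊕ Fin n) (Fin n ⊕ Fin n) ℝ)
    (hP : IsUnit P.det)
    (W : Set ((Fin n ⊕ Fin n → ℝ) × (Fin n ⊕ Fin n → ℝ)))
    (hW : W = {w | ∃ u : Fin n ⊕ Fin n → ℝ, w = (P.mulVec u, P.mulVec (A.mulVec u))})
    (hΩ : ∀ w ∈ W, ∀ w' ∈ W, OmegaForm n w w' = 0) :
    List.TFAE
      [ ∀ w ∈ W, ∀ w' ∈ W, Omega2Form n w w' = 0,
        (fun w : (Fin n ⊕ Fin n → ℝ) × (Fin n ⊕ Fin n → ℝ) => (w.2, -w.1)) '' W = W,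
        A * A = -1,
        ∃ S : Matrix (Fin n ⊕ Fin n) (Fin n ⊕ Fin n) ℝ,
          IsUnit S.det ∧ A = S * Jmat n * S⁻¹ ] := by
  obtain rfl : W = Set.range fun u => (P *ᵥ u, P *ᵥ A *ᵥ u) :=
    hW.trans (Set.ext fun _ => exists_congr fun _ => eq_comm)
  simp only [Set.forall_mem_range, OmegaForm_mulVec, forall_dotProduct_mulVec_eq_zero_iff] at hΩ
  have hM : IsUnit (Pᵀ * Jmat n * P).det := by
    rw [det_mul, det_mul, det_transpose]
    exact (hP.mul isUnit_det_Jmat).mul hP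
  tfae_have 1 ↔ 3 := by
    simp only [Set.forall_mem_range, Omega2Form_mulVec, forall_dotProduct_mulVec_eq_zero_iff]
    exact sub_transpose_mul_mul_eq_zero_iff hM hΩ
  tfae_have 2 ↔ 3 := image_swap_neg_range_mulVec_eq_iff hP
  tfae_have 3 ↔ 4 := (exists_isUnit_det_eq_mul_Jmat_mul_inv_iff A).symm
  tfae_finish

theorem stmt14 (n : ℕ) (hn : 1 ≤ n)
    (P A : Matrix (Fin n ⊕ Fin n) (Fin n ⊕ Fin n) ℝ)
    (hP : IsUnit P.det) (hA : IsUnit A.det)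
    (W : Set ((Fin n ⊕ Fin n → ℝ) × (Fin n ⊕ Fin n → ℝ)))
    (hW : W = {w | ∃ u : Fin n ⊕ Fin n → ℝ, w = (P.mulVec u, P.mulVec (A.mulVec u))})
    (hΩ : ∀ w ∈ W, ∀ w' ∈ W, OmegaForm n w w' = 0) :
    List.TFAE
      [ ∀ w ∈ W, ∀ w' ∈ W, Omega2Form n w w' = 0,
        (fun w : (Fin n ⊕ Fin n → ℝ) × (Fin n ⊕ Fin n → ℝ) => (w.2, -w.1)) '' W = W,
        A * A = -1,
        ∃ S : Matrix (Fin n ⊕ Fin n) (Fin n ⊕ Fin n) ℝ,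
          IsUnit S.det ∧ A = S * Jmat n * S⁻¹ ] :=
  stmt14_general n P A hP W hW hΩ
end

section
/- Let n ≥ 1, let V ⊆ ℝ^{2n} be open, let F : V → ℝ be C², and let L : V → ℝ^{2n} × ℝ^{2n} be the Lagrangian lift L(x) = (x, Y_F(x)). Then for every x ∈ V, the following are equivalent: (a) L pulls back Ω₂ to zero at x, i.e. Ω₂((u, DY_F(x)u), (v, DY_F(x)v)) = 0 for all u, v ∈ ℝ^{2n}; (b) (DY_F(x))² = −I_{2n}. (This is the analytic content of the theorem that the solutions of the exterior differential system {Ω, Ω₂} are exactly the special improper affine spheres.) -/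
open Matrix

/-- The Hamiltonian vector field of `F`. -/
noncomputable def hamVF (n : ℕ) (F : (Fin n ⊕ Fin n → ℝ) → ℝ) (x : Fin n ⊕ Fin n → ℝ) :
    Fin n ⊕ Fin n → ℝ :=
  Sum.elim (fun i => -(fderiv ℝ F x (Pi.single (Sum.inr i) 1)))
    (fun i => fderiv ℝ F x (Pi.single (Sum.inl i) 1))

/-- The Jacobian matrix of a map between finite-dimensional coordinate spaces. -/
noncomputable def jacM {ι κ : Type*} [Fintype ι] [DecidableEq ι] [Fintype κ]
    (g : (ι → ℝ) → (κ → ℝ)) (r : ι → ℝ) : Matrix κ ι ℝ :=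
  Matrix.of fun i j => fderiv ℝ g r (Pi.single j 1) i

/-! With Mathlib's `J = [[0, -1], [1, 0]]` we have `ω(u, v) = -(u ⬝ J v)`, so (a) says that
`A = DY_F(x)` is symplectic: `Aᵀ J A = J`. Since `Y_F = J ∇F`, `A = J H` with `H` the Hessian of
`F`, which is symmetric because `F` is C². Hence `Aᵀ J = H = -J A`, so `Aᵀ J A = -J A²`, and this
equals `J` exactly when `A² = -1`. -/

namespace Matrix

variable {l R : Type*} [Fintype l] [DecidableEq l] [CommRing R]

theorem ext_of_dotProduct_mulVec {m n : Type*} [Fintype m] [Fintype n] [DecidableEq m]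
    [DecidableEq n] {M N : Matrix m n R} (h : ∀ u v, u ⬝ᵥ M *ᵥ v = u ⬝ᵥ N *ᵥ v) : M = N := by
  ext i j
  simpa using h (Pi.single i 1) (Pi.single j 1)

theorem transpose_J_mul_mul_J {H : Matrix (l ⊕ l) (l ⊕ l) R} (hH : H.IsSymm) :
    (J l R * H)ᵀ * J l R = -(J l R * (J l R * H)) := by
  rw [transpose_mul, hH.eq, J_transpose, Matrix.mul_assoc, neg_mul, mul_neg, J_squared,
    ← Matrix.mul_assoc, J_squared]
  simp

theorem mem_symplecticGroup_iff_mul_self_eq_neg_one {A : Matrix (l ⊕ l) (l ⊕ l) R}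
    (hA : Aᵀ * J l R = -(J l R * A)) : A ∈ symplecticGroup l R ↔ A * A = -1 := by
  rw [SymplecticGroup.mem_iff', hA, neg_mul, Matrix.mul_assoc]
  constructor
  · intro h
    simpa [← Matrix.mul_assoc, J_squared] using congrArg (J l R * ·) h
  · intro h
    rw [h, mul_neg, mul_one, neg_neg]

end Matrix

theorem sform_eq_neg_dotProduct_J {n : ℕ} (u v : Fin n ⊕ Fin n → ℝ) :
    sform n u v = -(u ⬝ᵥ J (Fin n) ℝ *ᵥ v) := by
  simp [sform, J, dotProduct, Fintype.sum_sum_type, mulVec, fromBlocks, Matrix.one_apply]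
  ring

theorem forall_Omega2Form_graph_eq_zero_iff {n : ℕ} (A : Matrix (Fin n ⊕ Fin n) (Fin n ⊕ Fin n) ℝ) :
    (∀ u v, Omega2Form n (u, A *ᵥ u) (v, A *ᵥ v) = 0) ↔ A ∈ symplecticGroup (Fin n) ℝ := by
  have hpull : ∀ u v, sform n (A *ᵥ u) (A *ᵥ v) = -(u ⬝ᵥ (Aᵀ * J (Fin n) ℝ * A) *ᵥ v) := by
    intro u v
    rw [sform_eq_neg_dotProduct_J, mulVec_mulVec, dotProduct_mulVec, ← vecMul_transpose,
      vecMul_vecMul, ← dotProduct_mulVec, Matrix.mul_assoc]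
  simp only [Omega2Form, hpull, sform_eq_neg_dotProduct_J, sub_eq_zero, neg_inj,
    SymplecticGroup.mem_iff']
  exact ⟨fun h => (ext_of_dotProduct_mulVec fun u v => h u v).symm, fun h u v => by rw [h]⟩

section Calculus

variable {ι κ μ : Type*} [Fintype ι] [DecidableEq ι] [Fintype κ] [Fintype μ]

noncomputable def gradVec (F : (ι → ℝ) → ℝ) (y : ι → ℝ) : ι → ℝ :=
  fun k => fderiv ℝ F y (Pi.single k 1)

theorem jacM_const_mulVec {g : (ι → ℝ) → κ → ℝ} {r : ι → ℝ} (hg : DifferentiableAt ℝ g r)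
    (M : Matrix μ κ ℝ) : jacM (fun y => M *ᵥ g y) r = M * jacM g r := by
  have hcomp : (fun y => M *ᵥ g y) = M.mulVecLin.toContinuousLinearMap ∘ g := rfl
  ext i j
  rw [hcomp, jacM, of_apply, fderiv_comp r (ContinuousLinearMap.differentiableAt _) hg,
    ContinuousLinearMap.fderiv]
  simp [jacM, mulVec, dotProduct, mul_apply]

variable {F : (ι → ℝ) → ℝ} {x : ι → ℝ}

theorem differentiableAt_gradVec (h : DifferentiableAt ℝ (fderiv ℝ F) x) :
    DifferentiableAt ℝ (gradVec F) x :=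
  differentiableAt_pi.2 fun _ => h.clm_apply (differentiableAt_const _)

theorem jacM_gradVec (h : DifferentiableAt ℝ (fderiv ℝ F) x) :
    jacM (gradVec F) x = of fun i j => fderiv ℝ (fderiv ℝ F) x (Pi.single j 1) (Pi.single i 1) := by
  ext i j
  unfold gradVec
  rw [jacM, of_apply, of_apply, fderiv_pi fun _ => h.clm_apply (differentiableAt_const _)]
  simp [fderiv_clm_apply h (differentiableAt_const _)]

theorem isSymm_jacM_gradVec (h : DifferentiableAt ℝ (fderiv ℝ F) x)
    (hsymm : IsSymmSndFDerivAt ℝ F x) : (jacM (gradVec F) x).IsSymm := by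
  ext i j
  simp [jacM_gradVec h, hsymm (Pi.single i 1)]

end Calculus

theorem hamVF_eq_J_mulVec_gradVec {n : ℕ} (F : (Fin n ⊕ Fin n → ℝ) → ℝ) :
    hamVF n F = fun y => J (Fin n) ℝ *ᵥ gradVec F y := by
  ext y (i | i) <;>
    simp [hamVF, gradVec, J, mulVec, dotProduct, fromBlocks, Fintype.sum_sum_type, one_apply]

theorem stmt19_general (n : ℕ) (V : Set (Fin n ⊕ Fin n → ℝ)) (hV : IsOpen V)
    (F : (Fin n ⊕ Fin n → ℝ) → ℝ) (hF : ContDiffOn ℝ 2 F V) :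
    ∀ x ∈ V,
      ((∀ u v : Fin n ⊕ Fin n → ℝ,
        Omega2Form n (u, (jacM (hamVF n F) x).mulVec u)
          (v, (jacM (hamVF n F) x).mulVec v) = 0) ↔
      jacM (hamVF n F) x * jacM (hamVF n F) x = -1) := by
  intro x hx
  have hF2 : ContDiffAt ℝ 2 F x := hF.contDiffAt (hV.mem_nhds hx)
  have hdF : DifferentiableAt ℝ (fderiv ℝ F) x :=
    (hF2.fderiv_right (m := 1) le_rfl).differentiableAt one_ne_zero
  have hjac : jacM (hamVF n F) x = J (Fin n) ℝ * jacM (gradVec F) x := by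
    rw [hamVF_eq_J_mulVec_gradVec, jacM_const_mulVec (differentiableAt_gradVec hdF)]
  rw [forall_Omega2Form_graph_eq_zero_iff, hjac]
  exact mem_symplecticGroup_iff_mul_self_eq_neg_one
    (transpose_J_mul_mul_J (isSymm_jacM_gradVec hdF (hF2.isSymmSndFDerivAt (by simp))))

theorem stmt19 (n : ℕ) (hn : 1 ≤ n) (V : Set (Fin n ⊕ Fin n → ℝ)) (hV : IsOpen V)
    (F : (Fin n ⊕ Fin n → ℝ) → ℝ) (hF : ContDiffOn ℝ 2 F V) :
    ∀ x ∈ V,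
      ((∀ u v : Fin n ⊕ Fin n → ℝ,
        Omega2Form n (u, (jacM (hamVF n F) x).mulVec u)
          (v, (jacM (hamVF n F) x).mulVec v) = 0) ↔
      jacM (hamVF n F) x * jacM (hamVF n F) x = -1) :=
  stmt19_general n V hV F hF
end
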